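/- arXiv:1905.05897 — 3 statements merged into one kernel-verified Lean document; each statement's English description precedes it below -/
import Mathlib

section
/- Let V be a finite-dimensional real inner product space, let L be a finite set of labels with |L| ≥ 2, let p_1, ..., p_k ∈ V be points (the poison feature vectors), let t ∈ V (the target feature vector), and fix a label ℓ_p ∈ L. Then the following two statements are equivalent: (1) every linear classifier (w, b) that classifies each p_j into label ℓ_p also classifies t into label ℓ_p; (2) t is a convex combination of p_1, ..., p_k, i.e., there exist c_1, ..., c_k ≥ 0 with c_1 + ... + c_k = 1 such that t = c_1 p_1 + ... + c_k p_k (equivalently, t lies in the convex hull of {p_1, ..., p_k}). -/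
/-!
The points classified into `ℓp` by a linear classifier form an intersection of open half-spaces,
hence a convex set; if it contains every poison it contains their convex hull. Conversely, if `t`
lies outside the (compact, convex) hull of the poisons, projecting `t` onto the hull yields a
vector `v` with `⟪v, t⟫ < ⟪v, p j⟫` for all `j`, and the classifier that scores `ℓp` by
`⟪v, x⟫ - ⟪v, t⟫` and every other label by `0` accepts all poisons but not `t`.
-/

open RealInnerProductSpace Set

theorem convexHull_range_eq_image_stdSimplex {R E ι : Type*} [Field R] [LinearOrder R]
    [IsStrictOrderedRing R] [AddCommGroup E] [Module R E] [Fintype ι] (v : ι → E) :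
    convexHull R (range v) = (fun c : ι → R ↦ ∑ i, c i • v i) '' stdSimplex R ι := by
  classical
  have hv : ⇑(Fintype.linearCombination R v) = fun c : ι → R ↦ ∑ i, c i • v i :=
    funext (Fintype.linearCombination_apply R v)
  rw [← hv, ← convexHull_rangle_single_eq_stdSimplex, LinearMap.image_convexHull, ← range_comp]
  congr 2
  funext i
  simp only [Function.comp_apply, Fintype.linearCombination_apply_single, one_smul]

theorem mem_convexHull_range_iff_exists_sum {R E ι : Type*} [Field R] [LinearOrder R]
    [IsStrictOrderedRing R] [AddCommGroup E] [Module R E] [Fintype ι] (v : ι → E) (x : E) :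
    x ∈ convexHull R (range v) ↔
      ∃ c : ι → R, (∀ i, 0 ≤ c i) ∧ ∑ i, c i = 1 ∧ x = ∑ i, c i • v i := by
  rw [convexHull_range_eq_image_stdSimplex]
  constructor
  · rintro ⟨c, ⟨hc₀, hc₁⟩, rfl⟩
    exact ⟨c, hc₀, hc₁, rfl⟩
  · rintro ⟨c, hc₀, hc₁, rfl⟩
    exact ⟨c, ⟨hc₀, hc₁⟩, rfl⟩

/-- The vector from `t` to its nearest point in `K` separates `t` strictly from `K`. -/
theorem exists_inner_lt_of_notMem_of_isComplete {F : Type*} [NormedAddCommGroup F]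
    [InnerProductSpace ℝ F] {K : Set F} (hconv : Convex ℝ K) (hcompl : IsComplete K) {t : F}
    (ht : t ∉ K) : ∃ v : F, ∀ x ∈ K, ⟪v, t⟫ < ⟪v, x⟫ := by
  rcases K.eq_empty_or_nonempty with rfl | hne
  · exact ⟨0, fun x hx ↦ hx.elim⟩
  obtain ⟨y, hyK, hy⟩ := exists_norm_eq_iInf_of_complete_convex hne hcompl hconv t
  have hobtuse := (norm_eq_iInf_iff_real_inner_le_zero hconv hyK).1 hy
  have hpos : 0 < ⟪y - t, y - t⟫ :=
    real_inner_self_pos.2 (sub_ne_zero.2 fun h ↦ ht (h ▸ hyK))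
  refine ⟨y - t, fun x hx ↦ ?_⟩
  calc ⟪y - t, t⟫ < ⟪y - t, t⟫ + ⟪y - t, y - t⟫ - ⟪t - y, x - y⟫ := by
        linarith [hobtuse x hx]
    _ = ⟪y - t, x⟫ := by
      rw [← neg_sub y t, inner_neg_left, inner_sub_right, inner_sub_right]
      ring

section DecisionRegion

variable {V L : Type*} [NormedAddCommGroup V] [InnerProductSpace ℝ V]

def decisionRegion (w : L → V) (b : L → ℝ) (ℓ : L) : Set V :=
  {x | ∀ i, i ≠ ℓ → ⟪w i, x⟫ + b i < ⟪w ℓ, x⟫ + b ℓ}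

theorem convex_decisionRegion (w : L → V) (b : L → ℝ) (ℓ : L) :
    Convex ℝ (decisionRegion w b ℓ) := by
  have hregion : decisionRegion w b ℓ =
      ⋂ i, ⋂ (_ : i ≠ ℓ), {x | b i - b ℓ < ⟪w ℓ - w i, x⟫} := by
    ext x
    simp only [decisionRegion, mem_ofPred_eq, mem_iInter, inner_sub_left, sub_lt_sub_iff,
      add_comm (b _)]
  rw [hregion]
  exact convex_iInter₂ fun i _ ↦ convex_halfSpace_gt (innerₛₗ ℝ (w ℓ - w i)).isLinear _

theorem mem_decisionRegion_single_iff [DecidableEq L] [Nontrivial L] (ℓ : L) (v : V) (c : ℝ)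
    (x : V) : x ∈ decisionRegion (Pi.single ℓ v) (Pi.single ℓ c) ℓ ↔ -c < ⟪v, x⟫ := by
  obtain ⟨i, hi⟩ := exists_ne ℓ
  constructor
  · intro hx
    have := hx i hi
    simp only [Pi.single_eq_same, Pi.single_eq_of_ne hi, inner_zero_left] at this
    linarith
  · intro hx j hj
    simp only [Pi.single_eq_same, Pi.single_eq_of_ne hj, inner_zero_left]
    linarith

end DecisionRegion

theorem convex_polytope_iff_every_classifier_general
    {V : Type*} [NormedAddCommGroup V] [InnerProductSpace ℝ V]
    {L : Type*} [Fintype L] (hL : 2 ≤ Fintype.card L)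
    {k : ℕ} (p : Fin k → V) (t : V) (ℓp : L) :
    (∀ (w : L → V) (b : L → ℝ),
        (∀ j : Fin k, ∀ i : L, i ≠ ℓp → ⟪w ℓp, p j⟫ + b ℓp > ⟪w i, p j⟫ + b i) →
        (∀ i : L, i ≠ ℓp → ⟪w ℓp, t⟫ + b ℓp > ⟪w i, t⟫ + b i)) ↔
    (∃ c : Fin k → ℝ, (∀ j, 0 ≤ c j) ∧ (∑ j, c j) = 1 ∧ t = ∑ j, c j • p j) := by
  classical
  have : Nontrivial L := Fintype.one_lt_card_iff_nontrivial.1 hL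
  rw [← mem_convexHull_range_iff_exists_sum]
  constructor
  · intro hclassified
    by_contra ht
    obtain ⟨v, hv⟩ := exists_inner_lt_of_notMem_of_isComplete (convex_convexHull ℝ _)
      ((finite_range p).isCompact_convexHull ℝ).isComplete ht
    have hpoisons (j : Fin k) :
        p j ∈ decisionRegion (Pi.single ℓp v) (Pi.single ℓp (-⟪v, t⟫)) ℓp :=
      (mem_decisionRegion_single_iff ℓp v _ _).2 <| by
        simpa using hv _ (subset_convexHull ℝ _ (mem_range_self j))
    have htarget := (mem_decisionRegion_single_iff ℓp v _ t).1 (hclassified _ _ hpoisons)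
    simp at htarget
  · intro ht w b hpoisons
    exact convexHull_min (range_subset_iff.2 hpoisons) (convex_decisionRegion w b ℓp) ht

/-- **Proposition 1 (full equivalence).** For a finite-dimensional real inner product
space `V`, a finite label set `L` with at least two labels, poison feature vectors
`p 1, …, p k`, a target `t`, and a fixed label `ℓp`: every linear classifier `(w, b)`
that classifies all the poisons into `ℓp` also classifies `t` into `ℓp` if and only if
`t` is a convex combination of the poisons. -/
theorem convex_polytope_iff_every_classifier
    {V : Type*} [NormedAddCommGroup V] [InnerProductSpace ℝ V] [FiniteDimensional ℝ V]
    {L : Type*} [Fintype L] (hL : 2 ≤ Fintype.card L)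
    {k : ℕ} (p : Fin k → V) (t : V) (ℓp : L) :
    (∀ (w : L → V) (b : L → ℝ),
        (∀ j : Fin k, ∀ i : L, i ≠ ℓp → ⟪w ℓp, p j⟫ + b ℓp > ⟪w i, p j⟫ + b i) →
        (∀ i : L, i ≠ ℓp → ⟪w ℓp, t⟫ + b ℓp > ⟪w i, t⟫ + b i)) ↔
    (∃ c : Fin k → ℝ, (∀ j, 0 ≤ c j) ∧ (∑ j, c j) = 1 ∧ t = ∑ j, c j • p j) :=
  convex_polytope_iff_every_classifier_general hL p t ℓp
end

section
/- Let V be a finite-dimensional real inner product space, let L be a finite set of labels with |L| ≥ 2, let p_1, ..., p_k ∈ V, fix a label ℓ_p ∈ L, and suppose t ∈ V does NOT lie in the convex hull of {p_1, ..., p_k}. Then there exists a linear classifier (w, b) over L that classifies each p_j into label ℓ_p but does not classify t into label ℓ_p. -/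
/-!
Separate `t` from the (closed, convex) hull of the poisons by a hyperplane `⟪v, x⟫ = u`.
The classifier giving label `ℓp` the score `⟪v, x⟫ - u` and every other label the score `0`
then picks `ℓp` exactly on the side of the hyperplane containing the poisons; with a second
label available, `t` is not classified into `ℓp`.
-/

open RealInnerProductSpace

section Separation

variable {V : Type*} [NormedAddCommGroup V] [InnerProductSpace ℝ V] [CompleteSpace V]

theorem exists_inner_lt_lt_of_notMem_of_isClosed_of_convex {s : Set V} {t : V}
    (hconv : Convex ℝ s) (hclosed : IsClosed s) (ht : t ∉ s) :
    ∃ (v : V) (u : ℝ), ⟪v, t⟫ < u ∧ ∀ x ∈ s, u < ⟪v, x⟫ := by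
  obtain ⟨f, u, hft, hfs⟩ := geometric_hahn_banach_point_closed hconv hclosed ht
  set v := (InnerProductSpace.toDual ℝ V).symm f
  have hv : ∀ x, ⟪v, x⟫ = f x := fun x => InnerProductSpace.toDual_symm_apply
  exact ⟨v, u, (hv t).symm ▸ hft, fun x hx => (hv x).symm ▸ hfs x hx⟩

theorem exists_inner_lt_lt_of_notMem_convexHull {s : Set V} {t : V} (hs : s.Finite)
    (ht : t ∉ convexHull ℝ s) :
    ∃ (v : V) (u : ℝ), ⟪v, t⟫ < u ∧ ∀ x ∈ s, u < ⟪v, x⟫ := by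
  obtain ⟨v, u, hvt, hvs⟩ := exists_inner_lt_lt_of_notMem_of_isClosed_of_convex
    (convex_convexHull ℝ s) (hs.isClosed_convexHull (𝕜 := ℝ)) ht
  exact ⟨v, u, hvt, fun x hx => hvs x (subset_convexHull ℝ s hx)⟩

end Separation

section Classifier

variable {V : Type*} [NormedAddCommGroup V] [InnerProductSpace ℝ V] {L : Type*}

def Classifies (w : L → V) (b : L → ℝ) (x : V) (ℓ : L) : Prop :=
  ∀ i, i ≠ ℓ → ⟪w ℓ, x⟫ + b ℓ > ⟪w i, x⟫ + b i

theorem classifies_single_iff [DecidableEq L] [Nontrivial L] {v x : V} {u : ℝ} {ℓ : L} :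
    Classifies (Pi.single ℓ v) (Pi.single ℓ (-u)) x ℓ ↔ u < ⟪v, x⟫ := by
  have score_ne : ∀ i, i ≠ ℓ →
      ⟪(Pi.single ℓ v : L → V) i, x⟫ + (Pi.single ℓ (-u) : L → ℝ) i = 0 := by
    intro i hi
    simp [Pi.single_eq_of_ne hi]
  simp only [Classifies, Pi.single_eq_same]
  constructor
  · intro h
    obtain ⟨i, hi⟩ := exists_ne ℓ
    linarith [h i hi, score_ne i hi]
  · intro h i hi
    linarith [score_ne i hi]

end Classifier

/-- **Proposition 1, direction (1 ⟹ 2), contrapositive.** If the target `t` does not lie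
in the convex hull of the poison feature vectors `p 1, …, p k`, and there are at least two
labels, then there exists a linear classifier `(w, b)` that classifies each poison into
the label `ℓp` but does not classify `t` into `ℓp`. -/
theorem exists_classifier_separating_of_not_mem_convexHull
    {V : Type*} [NormedAddCommGroup V] [InnerProductSpace ℝ V] [FiniteDimensional ℝ V]
    {L : Type*} [Fintype L] (hL : 2 ≤ Fintype.card L)
    {k : ℕ} (p : Fin k → V) (t : V) (ℓp : L)
    (ht : t ∉ convexHull ℝ (Set.range p)) :
    ∃ (w : L → V) (b : L → ℝ),
      (∀ j : Fin k, ∀ i : L, i ≠ ℓp → ⟪w ℓp, p j⟫ + b ℓp > ⟪w i, p j⟫ + b i) ∧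
      ¬ (∀ i : L, i ≠ ℓp → ⟪w ℓp, t⟫ + b ℓp > ⟪w i, t⟫ + b i) := by
  classical
  have : Nontrivial L := Fintype.one_lt_card_iff_nontrivial.mp hL
  obtain ⟨v, u, hvt, hvp⟩ := exists_inner_lt_lt_of_notMem_convexHull (Set.finite_range p) ht
  refine ⟨Pi.single ℓp v, Pi.single ℓp (-u), fun j => ?_, fun h => ?_⟩
  · exact classifies_single_iff.mpr (hvp _ (Set.mem_range_self j))
  · exact hvt.not_gt (classifies_single_iff.mp h)
end

section
/- Let V be a finite-dimensional real inner product space, let L be a finite set of labels, let (w, b) be a linear classifier over L, fix a label ℓ ∈ L, let ρ > 0, and let p_1, ..., p_k ∈ V be points that are classified into ℓ with margin ρ, i.e., for every j and every i ≠ ℓ, ⟪w_ℓ − w_i, p_j⟫ + (b_ℓ − b_i) > ρ·‖w_ℓ − w_i‖. If t ∈ V satisfies ‖t − q‖ ≤ ρ for some point q in the convex hull of {p_1, ..., p_k}, then (w, b) classifies t into label ℓ. In particular, if the poisons are classified as expected and the residual of t to the convex polytope of the poisons is at most the margin ρ, the target t is classified into the poisons' class. -/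
/-!
For each rival label `i`, the margin condition puts every poison in the open half-space
`{x | ρ‖v‖ < ⟪v, x⟫ + c}` with `v = w ℓ - w i`, `c = b ℓ - b i`; being convex, it contains `q`.
By Cauchy–Schwarz, moving from `q` to `t` lowers `⟪v, ·⟫` by at most `‖v‖ ‖t - q‖ ≤ ρ‖v‖`,
so `⟪v, t⟫ + c` stays positive.
-/

open RealInnerProductSpace

theorem inner_add_gt_of_mem_convexHull {V : Type*} [NormedAddCommGroup V] [InnerProductSpace ℝ V]
    {s : Set V} {v q : V} {c r : ℝ} (hs : ∀ x ∈ s, r < ⟪v, x⟫ + c)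
    (hq : q ∈ convexHull ℝ s) : r < ⟪v, q⟫ + c := by
  have hconv : Convex ℝ {x : V | r - c < ⟪v, x⟫} :=
    convex_halfSpace_gt (innerₛₗ ℝ v).isLinear _
  have hsub : s ⊆ {x : V | r - c < ⟪v, x⟫} := fun x hx => by
    simp only [Set.mem_ofPred_eq]
    linarith [hs x hx]
  exact sub_lt_iff_lt_add.mp (convexHull_min hsub hconv hq)

theorem inner_add_pos_of_norm_sub_le {V : Type*} [NormedAddCommGroup V] [InnerProductSpace ℝ V]
    {v q t : V} {c ρ : ℝ} (hq : ρ * ‖v‖ < ⟪v, q⟫ + c) (htq : ‖t - q‖ ≤ ρ) :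
    0 < ⟪v, t⟫ + c := by
  have hdrift : -(ρ * ‖v‖) ≤ ⟪v, t - q⟫ :=
    calc -(ρ * ‖v‖) ≤ -(‖v‖ * ‖t - q‖) := by
          rw [mul_comm ρ]
          exact neg_le_neg (mul_le_mul_of_nonneg_left htq (norm_nonneg v))
      _ ≤ ⟪v, t - q⟫ := neg_le_of_abs_le (abs_real_inner_le_norm v (t - q))
  rw [inner_sub_right] at hdrift
  linarith

theorem classifies_target_of_residual_le_margin_general
    {V : Type*} [NormedAddCommGroup V] [InnerProductSpace ℝ V]
    {L : Type*} (w : L → V) (b : L → ℝ) (ℓ : L)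
    (ρ : ℝ)
    {k : ℕ} (p : Fin k → V)
    (hmargin : ∀ j : Fin k, ∀ i : L, i ≠ ℓ →
      ⟪w ℓ - w i, p j⟫ + (b ℓ - b i) > ρ * ‖w ℓ - w i‖)
    (t q : V) (hq : q ∈ convexHull ℝ (Set.range p)) (htq : ‖t - q‖ ≤ ρ) :
    ∀ i : L, i ≠ ℓ → ⟪w ℓ, t⟫ + b ℓ > ⟪w i, t⟫ + b i := by
  intro i hi
  have hq_margin : ρ * ‖w ℓ - w i‖ < ⟪w ℓ - w i, q⟫ + (b ℓ - b i) :=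
    inner_add_gt_of_mem_convexHull (by rintro _ ⟨j, rfl⟩; exact hmargin j i hi) hq
  have ht := inner_add_pos_of_norm_sub_le hq_margin htq
  rw [inner_sub_left] at ht
  linarith

/-- If the poisons `p 1, …, p k` are all classified into the label `ℓ` with margin `ρ`,
i.e. `⟪w ℓ - w i, p j⟫ + (b ℓ - b i) > ρ * ‖w ℓ - w i‖` for all `j` and all `i ≠ ℓ`,
and the target `t` is within distance `ρ` of some point `q` of the convex hull of the
poisons, then the classifier `(w, b)` classifies `t` into `ℓ`. -/
theorem classifies_target_of_residual_le_margin
    {V : Type*} [NormedAddCommGroup V] [InnerProductSpace ℝ V] [FiniteDimensional ℝ V]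
    {L : Type*} [Fintype L] (w : L → V) (b : L → ℝ) (ℓ : L)
    (ρ : ℝ) (hρ : 0 < ρ)
    {k : ℕ} (p : Fin k → V)
    (hmargin : ∀ j : Fin k, ∀ i : L, i ≠ ℓ →
      ⟪w ℓ - w i, p j⟫ + (b ℓ - b i) > ρ * ‖w ℓ - w i‖)
    (t q : V) (hq : q ∈ convexHull ℝ (Set.range p)) (htq : ‖t - q‖ ≤ ρ) :
    ∀ i : L, i ≠ ℓ → ⟪w ℓ, t⟫ + b ℓ > ⟪w i, t⟫ + b i :=
  classifies_target_of_residual_le_margin_general w b ℓ ρ p hmargin t q hq htq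
end
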